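/- For all d ≥ 2 and h ≥ 2, the complete d-ary tree of height h can be fractionally pebbled using at most (d-1)h/2 + 1 pebbles. -/

import Mathlib

/-! ## Fractional black-white pebbling -/

/-- A fractional pebble configuration: black and white pebble values on each node. -/
structure FConfig (V : Type) where
  b : V → ℝ
  w : V → ℝ

namespace FConfig

/-- Validity: all values nonnegative, total value of each node at most 1. -/
def Valid {V : Type} (C : FConfig V) : Prop :=
  ∀ v, 0 ≤ C.b v ∧ 0 ≤ C.w v ∧ C.b v + C.w v ≤ 1

/-- Total pebble weight of a configuration. -/
noncomputable def weight {V : Type} [Fintype V] (C : FConfig V) : ℝ :=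
  ∑ v, (C.b v + C.w v)

/-- The empty configuration. -/
def zero (V : Type) : FConfig V := ⟨fun _ => 0, fun _ => 0⟩

/-- A whole (non-fractional) configuration: all values 0 or 1. -/
def Whole {V : Type} (C : FConfig V) : Prop :=
  ∀ v, (C.b v = 0 ∨ C.b v = 1) ∧ (C.w v = 0 ∨ C.w v = 1)

/-- A black configuration: whole, and with no white pebbles. -/
def BlackOnly {V : Type} (C : FConfig V) : Prop :=
  C.Whole ∧ ∀ v, C.w v = 0

end FConfig

/-- One legal move of the fractional black-white pebble game (no white sliding):
(i) decrease a black value; (ii) increase a white value; (iii) if every child of `v`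
has total pebble value 1, decrease `w v` to 0 and/or increase `b v` arbitrarily while
simultaneously decreasing the black values of the children of `v` arbitrarily.
Here `child c v` means `c` is a child of `v`. -/
def FMove {V : Type} (child : V → V → Prop) (C C' : FConfig V) : Prop :=
  (∃ v, C'.b v ≤ C.b v ∧ C'.w v = C.w v ∧
     ∀ u, u ≠ v → C'.b u = C.b u ∧ C'.w u = C.w u) ∨
  (∃ v, C'.b v = C.b v ∧ C.w v ≤ C'.w v ∧
     ∀ u, u ≠ v → C'.b u = C.b u ∧ C'.w u = C.w u) ∨
  (∃ v, (∀ c, child c v → C.b c + C.w c = 1) ∧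
     C.b v ≤ C'.b v ∧ (C'.w v = 0 ∨ C'.w v = C.w v) ∧
     (∀ c, child c v → C'.b c ≤ C.b c ∧ C'.w c = C.w c) ∧
     (∀ u, u ≠ v → ¬ child u v → C'.b u = C.b u ∧ C'.w u = C.w u))

/-- The additional white sliding move: if `w v = 1`, `j` is a child of `v`, and every
child of `v` other than `j` has total pebble value 1, then set `w v = 0` and increase
`w j` so that `j` gets total pebble value 1. -/
def WhiteSlide {V : Type} (child : V → V → Prop) (C C' : FConfig V) : Prop :=
  ∃ v j, child j v ∧ j ≠ v ∧ C.w v = 1 ∧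
    (∀ c, child c v → c ≠ j → C.b c + C.w c = 1) ∧
    C'.w v = 0 ∧ C'.b v = C.b v ∧
    C'.b j = C.b j ∧ C.w j ≤ C'.w j ∧ C'.b j + C'.w j = 1 ∧
    (∀ u, u ≠ v → u ≠ j → C'.b u = C.b u ∧ C'.w u = C.w u)

/-- A pebbling of cost at most `p`, with moves given by `move`, all configurations
satisfying the extra constraint `Extra`, starting and ending with the empty
configuration and achieving `Goal` (a property of the whole sequence together with
its length). -/
def PebblingLE {V : Type} [Fintype V] (move : FConfig V → FConfig V → Prop)
    (Extra : FConfig V → Prop) (Goal : (ℕ → FConfig V) → ℕ → Prop) (p : ℝ) : Prop :=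
  ∃ (n : ℕ) (C : ℕ → FConfig V),
    C 0 = FConfig.zero V ∧ C n = FConfig.zero V ∧
    (∀ t ≤ n, (C t).Valid) ∧
    (∀ t ≤ n, Extra (C t)) ∧
    (∀ t < n, move (C t) (C (t + 1))) ∧
    Goal C n ∧
    (∀ t ≤ n, (C t).weight ≤ p)

/-! ## The complete `d`-ary tree of height `h` (with `h` levels) -/

/-- Nodes of the complete `d`-ary tree with `h` levels: a level `l < h`
together with an index among the `d ^ l` nodes of that level. -/
abbrev TNode (d h : ℕ) := Σ l : Fin h, Fin (d ^ (l : ℕ))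

/-- `c` is a child of `v` in the complete `d`-ary tree. -/
def IsChild (d h : ℕ) (c v : TNode d h) : Prop :=
  (c.1 : ℕ) = (v.1 : ℕ) + 1 ∧ ∃ j : Fin d, (c.2 : ℕ) = d * (v.2 : ℕ) + (j : ℕ)

/-- The root of the tree. -/
def troot (d h : ℕ) (hh : 0 < h) : TNode d h :=
  ⟨⟨0, hh⟩, ⟨0, by simp⟩⟩

/-- The tree `T_d^h` has a black pebbling of cost at most `p`. -/
def BlackPebbles (d h : ℕ) (hh : 0 < h) (p : ℝ) : Prop :=
  PebblingLE (FMove (IsChild d h)) FConfig.BlackOnly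
    (fun C n => ∃ t ≤ n, (C t).b (troot d h hh) = 1) p

/-- The tree `T_d^h` has a whole black-white pebbling (no white sliding)
of cost at most `p`. -/
def BWPebbles (d h : ℕ) (hh : 0 < h) (p : ℝ) : Prop :=
  PebblingLE (FMove (IsChild d h)) FConfig.Whole
    (fun C n => ∃ t ≤ n, (C t).b (troot d h hh) = 1) p

/-- The tree `T_d^h` has a fractional pebbling of cost at most `p`. -/
def FRPebbles (d h : ℕ) (hh : 0 < h) (p : ℝ) : Prop :=
  PebblingLE (FMove (IsChild d h)) (fun _ => True)
    (fun C n => ∃ t ≤ n, (C t).b (troot d h hh) = 1) p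

/-- Fractional pebbling of `T_d^h` where white sliding moves are also permitted. -/
def FRPebblesWS (d h : ℕ) (hh : 0 < h) (p : ℝ) : Prop :=
  PebblingLE (fun C C' => FMove (IsChild d h) C C' ∨ WhiteSlide (IsChild d h) C C')
    (fun _ => True)
    (fun C n => ∃ t ≤ n, (C t).b (troot d h hh) = 1) p

/-!
Induction on the height `k` of a node `v`. To pebble `v`: one child at a time, pebble each of the
first `d - 1` children, lower it to a half black pebble and clean up below it; then pebble the
last child, put a half white pebble on each of the first `d - 1` children, and pebble `v`, which
removes the black pebbles from all children. This leaves `d - 1` white halves on each level along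
the path of last children below `v`, of weight `(d - 1)(k - 1)/2`; a white half is discharged by
pebbling its node over it and cleaning up. While the recursion runs below a node, at most
`(d - 1)/2` pebbles wait on its children, so height `k` costs `(d - 1)k/2 + 1`.

Strategies only ask the surrounding configuration to vanish on all levels strictly below `v`
rather than on its subtree: during the recursion, every pebble outside the subtree of the current
node lies on its level or above.
-/

open Finset Relation

namespace FConfig

variable {V : Type}

attribute [ext] FConfig

instance : Add (FConfig V) := ⟨fun C D => ⟨C.b + D.b, C.w + D.w⟩⟩

instance : Zero (FConfig V) := ⟨zero V⟩

@[simp] lemma add_b (C D : FConfig V) (u : V) : (C + D).b u = C.b u + D.b u := rfl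
@[simp] lemma add_w (C D : FConfig V) (u : V) : (C + D).w u = C.w u + D.w u := rfl
@[simp] lemma zero_b (u : V) : (0 : FConfig V).b u = 0 := rfl
@[simp] lemma zero_w (u : V) : (0 : FConfig V).w u = 0 := rfl
@[simp] lemma zero_eq : zero V = 0 := rfl

instance : AddCommMonoid (FConfig V) where
  add_assoc _ _ _ := by ext <;> simp [add_assoc]
  zero_add _ := by ext <;> simp
  add_zero _ := by ext <;> simp
  add_comm _ _ := by ext <;> simp [add_comm]
  nsmul := nsmulRec

def ZeroOn (C : FConfig V) (S : Set V) : Prop :=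
  ∀ u ∈ S, C.b u = 0 ∧ C.w u = 0

lemma ZeroOn.mono {C : FConfig V} {S T : Set V} (hC : C.ZeroOn T) (hST : S ⊆ T) :
    C.ZeroOn S :=
  fun u hu => hC u (hST hu)

lemma ZeroOn.add {C D : FConfig V} {S : Set V} (hC : C.ZeroOn S) (hD : D.ZeroOn S) :
    (C + D).ZeroOn S := by
  intro u hu
  simp [(hC u hu).1, (hC u hu).2, (hD u hu).1, (hD u hu).2]

lemma valid_zero : (0 : FConfig V).Valid := fun _ => by simp

lemma Valid.add {C D : FConfig V} {S : Set V} (hC : C.Valid) (hD : D.Valid)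
    (hCS : C.ZeroOn S) (hDS : D.ZeroOn Sᶜ) : (C + D).Valid := by
  intro u
  obtain ⟨hb, hw, hbw⟩ := hC u
  obtain ⟨hb', hw', hbw'⟩ := hD u
  by_cases hu : u ∈ S
  · obtain ⟨h1, h2⟩ := hCS u hu
    simp only [add_b, add_w, h1, h2]
    refine ⟨?_, ?_, ?_⟩ <;> linarith
  · obtain ⟨h1, h2⟩ := hDS u hu
    simp only [add_b, add_w, h1, h2]
    refine ⟨?_, ?_, ?_⟩ <;> linarith

lemma weight_add [Fintype V] (C D : FConfig V) : (C + D).weight = C.weight + D.weight := by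
  simp only [weight, add_b, add_w, ← Finset.sum_add_distrib]
  exact Finset.sum_congr rfl fun _ _ => by ring

lemma weight_zero [Fintype V] : (0 : FConfig V).weight = 0 := by
  simp [weight]

variable [DecidableEq V]

def update (C : FConfig V) (v : V) (x y : ℝ) : FConfig V :=
  ⟨Function.update C.b v x, Function.update C.w v y⟩

def indicator (s : Finset V) (x y : ℝ) : FConfig V :=
  ⟨fun u => if u ∈ s then x else 0, fun u => if u ∈ s then y else 0⟩

@[simp] lemma update_b (C : FConfig V) (v : V) (x y : ℝ) (u : V) :
    (C.update v x y).b u = if u = v then x else C.b u :=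
  Function.update_apply _ _ _ _

@[simp] lemma update_w (C : FConfig V) (v : V) (x y : ℝ) (u : V) :
    (C.update v x y).w u = if u = v then y else C.w u :=
  Function.update_apply _ _ _ _

@[simp] lemma indicator_b (s : Finset V) (x y : ℝ) (u : V) :
    (indicator s x y).b u = if u ∈ s then x else 0 := rfl

@[simp] lemma indicator_w (s : Finset V) (x y : ℝ) (u : V) :
    (indicator s x y).w u = if u ∈ s then y else 0 := rfl

lemma indicator_empty (x y : ℝ) : indicator (∅ : Finset V) x y = 0 := by
  ext <;> simp

lemma indicator_zero (s : Finset V) : indicator s 0 0 = 0 := by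
  ext <;> simp

lemma indicator_insert {a : V} {s : Finset V} (ha : a ∉ s) (x y : ℝ) :
    indicator (insert a s) x y = indicator s x y + indicator {a} x y := by
  ext u <;> by_cases hu : u = a <;> simp [hu, ha]

lemma indicator_add_indicator (s : Finset V) (x y x' y' : ℝ) :
    indicator s x y + indicator s x' y' = indicator s (x + x') (y + y') := by
  ext u <;> by_cases hu : u ∈ s <;> simp [hu]

lemma indicator_eq_add_indicator (s : Finset V) (x y : ℝ) :
    indicator s x y = indicator s x 0 + indicator s 0 y := by
  rw [indicator_add_indicator, add_zero, zero_add]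

lemma update_eq_add_indicator {C : FConfig V} {v : V} (hv : C.b v = 0 ∧ C.w v = 0)
    (x y : ℝ) : C.update v x y = C + indicator {v} x y := by
  ext u <;> by_cases hu : u = v <;> simp [hu, hv]

lemma add_update {C D : FConfig V} {v : V} (hv : D.b v = 0 ∧ D.w v = 0) (x y : ℝ) :
    (C + D).update v x y = C.update v x y + D := by
  ext u <;> by_cases hu : u = v <;> simp [hu, hv]

lemma ZeroOn.update {C : FConfig V} {S : Set V} (hC : C.ZeroOn S) {v : V} (hv : v ∉ S)
    (x y : ℝ) : (C.update v x y).ZeroOn S := by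
  intro u hu
  have huv : u ≠ v := fun h => hv (h ▸ hu)
  simp [huv, hC u hu]

lemma zeroOn_indicator {s : Finset V} {S : Set V} (hs : ∀ u ∈ S, u ∉ s) (x y : ℝ) :
    (indicator s x y).ZeroOn S := by
  intro u hu
  simp [hs u hu]

lemma zeroOn_indicator_of_level {s : Finset V} {lev : V → ℕ} {n : ℕ}
    (hs : ∀ c ∈ s, lev c = n) (x y : ℝ) : (indicator s x y).ZeroOn {u | lev u ≠ n} :=
  zeroOn_indicator (fun u (hu : lev u ≠ n) hus => hu (hs u hus)) x y

lemma Valid.update {C : FConfig V} (hC : C.Valid) (v : V) {x y : ℝ} (hx : 0 ≤ x) (hy : 0 ≤ y)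
    (hxy : x + y ≤ 1) : (C.update v x y).Valid := by
  intro u
  by_cases hu : u = v
  · simp [hu, hx, hy, hxy]
  · simpa [hu] using hC u

lemma valid_indicator (s : Finset V) {x y : ℝ} (hx : 0 ≤ x) (hy : 0 ≤ y) (hxy : x + y ≤ 1) :
    (indicator s x y).Valid := by
  intro u
  by_cases hu : u ∈ s <;> simp [hu, hx, hy, hxy]

lemma Valid.add_indicator {C : FConfig V} {s : Finset V} (hC : C.Valid) (hCs : C.ZeroOn ↑s)
    {x y : ℝ} (hx : 0 ≤ x) (hy : 0 ≤ y) (hxy : x + y ≤ 1) : (C + indicator s x y).Valid :=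
  hC.add (valid_indicator s hx hy hxy) hCs (zeroOn_indicator (fun _ hu => hu) x y)

variable [Fintype V]

lemma weight_indicator (s : Finset V) (x y : ℝ) :
    (indicator s x y).weight = s.card * (x + y) := by
  simp [weight, Finset.sum_add_distrib, Finset.sum_ite_mem]
  ring

lemma weight_update (C : FConfig V) (v : V) (x y : ℝ) :
    (C.update v x y).weight = C.weight - (C.b v + C.w v) + (x + y) := by
  have key : ∀ u, (C.update v x y).b u + (C.update v x y).w u
      = Function.update (fun u => C.b u + C.w u) v (x + y) u := by
    intro u; by_cases hu : u = v <;> simp [hu]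
  simp only [weight, key, Finset.sum_update_of_mem (Finset.mem_univ v)]
  rw [← Finset.add_sum_erase _ _ (Finset.mem_univ v), Finset.sdiff_singleton_eq_erase]
  ring

lemma weight_update_le {C : FConfig V} (hC : C.Valid) (v : V) (x y : ℝ) :
    (C.update v x y).weight ≤ C.weight + (x + y) := by
  rw [weight_update]
  linarith [(hC v).1, (hC v).2.1]

end FConfig

open FConfig

section Moves

variable {V : Type} {child : V → V → Prop}

lemma fmove_add_black {C : FConfig V} [DecidableEq V] (u : V) {x : ℝ} (hx : x ≤ 0) :
    FMove child C (C + indicator {u} x 0) :=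
  Or.inl ⟨u, by simp [hx], by simp, fun t ht => by simp [ht]⟩

lemma fmove_add_white {C : FConfig V} [DecidableEq V] (u : V) {y : ℝ} (hy : 0 ≤ y) :
    FMove child C (C + indicator {u} 0 y) :=
  Or.inr <| Or.inl ⟨u, by simp, by simp [hy], fun t ht => by simp [ht]⟩

/-- Move (iii) at `v`, removing the black pebbles `B` from the children of `v`. -/
lemma fmove_fire [DecidableEq V] {C B : FConfig V} {v : V} {b : ℝ}
    (hfull : ∀ c, child c v → (C + B).b c + (C + B).w c = 1)
    (hB : B.ZeroOn {u | ¬ child u v}) (hBb : ∀ u, 0 ≤ B.b u) (hBw : ∀ u, B.w u = 0)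
    (hvv : ¬ child v v) (hb : C.b v ≤ b) :
    FMove child (C + B) (C.update v b 0) := by
  refine Or.inr <| Or.inr ⟨v, hfull, ?_, Or.inl (by simp), fun c hc => ?_, fun u hu hu' => ?_⟩
  · simpa [(hB v hvv).1] using hb
  · have hcv : c ≠ v := fun h => hvv (h ▸ hc)
    simp [hcv, hBb c, hBw c]
  · simp [hu, (hB u hu').1, (hB u hu').2]

end Moves

/-- `C'` is reachable from `C` by legal moves through valid configurations of weight at most
`p` (the weight of `C` itself is not constrained). -/
def Reach {V : Type} [Fintype V] (child : V → V → Prop) (p : ℝ) :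
    FConfig V → FConfig V → Prop :=
  ReflTransGen fun C C' => FMove child C C' ∧ C'.Valid ∧ C'.weight ≤ p

namespace Reach

variable {V : Type} [Fintype V] {child : V → V → Prop} {p q : ℝ} {C C' C'' : FConfig V}

lemma refl (C : FConfig V) : Reach child p C C := ReflTransGen.refl

lemma trans (h : Reach child p C C') (h' : Reach child p C' C'') : Reach child p C C'' :=
  ReflTransGen.trans h h'

lemma mono (hpq : p ≤ q) (h : Reach child p C C') : Reach child q C C' :=
  ReflTransGen.mono (fun _ _ h => ⟨h.1, h.2.1, h.2.2.trans hpq⟩) _ _ h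

lemma of_fmove (h : FMove child C C') (hv : C'.Valid) (hw : C'.weight ≤ p) :
    Reach child p C C' :=
  ReflTransGen.single ⟨h, hv, hw⟩

end Reach

lemma Relation.ReflTransGen.finset_induction {α ι : Type*} [DecidableEq ι]
    {r : α → α → Prop} (f : Finset ι → α) (s : Finset ι)
    (h : ∀ a t, a ∈ s → t ⊆ s → a ∉ t → ReflTransGen r (f t) (f (insert a t))) :
    ReflTransGen r (f ∅) (f s) := by
  refine Finset.induction_on' s ReflTransGen.refl fun a t ha ht hat ih => ?_
  exact ih.trans (h a t ha ht hat)

lemma Relation.ReflTransGen.exists_seq_prepend {α : Type*} {r : α → α → Prop} {a b : α}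
    (hab : ReflTransGen r a b) (g : ℕ → α) (hg : g 0 = b) :
    ∃ n, ∃ f : ℕ → α, f 0 = a ∧ (∀ t, f (n + t) = g t) ∧
      ∀ t < n, r (f t) (f (t + 1)) := by
  induction hab using ReflTransGen.head_induction_on with
  | refl => exact ⟨0, g, hg, by simp, by simp⟩
  | head hstep _ ih =>
    obtain ⟨n, f, hf0, hfg, hf⟩ := ih
    refine ⟨n + 1, fun | 0 => _ | t + 1 => f t, rfl, fun t => ?_, fun t ht => ?_⟩
    · simpa [show n + 1 + t = (n + t) + 1 by omega] using hfg t
    · rcases t with _ | t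
      · simpa [hf0] using hstep
      · exact hf t (by omega)

lemma Relation.ReflTransGen.exists_seq_through {α : Type*} {r : α → α → Prop} {a b c : α}
    (hab : ReflTransGen r a b) (hbc : ReflTransGen r b c) :
    ∃ n, ∃ f : ℕ → α, ∃ m ≤ n, f 0 = a ∧ f m = b ∧ f n = c ∧
      ∀ t < n, r (f t) (f (t + 1)) := by
  obtain ⟨n, g, hg0, hgc, hg⟩ := hbc.exists_seq_prepend (fun _ => c) rfl
  obtain ⟨m, f, hf0, hfg, hf⟩ := hab.exists_seq_prepend g hg0
  refine ⟨m + n, f, m, by omega, hf0, by simpa [hg0] using hfg 0,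
    (hfg n).trans (by simpa using hgc 0),
    fun t ht => ?_⟩
  by_cases htm : t < m
  · exact hf t htm
  · obtain ⟨s, rfl⟩ := Nat.exists_eq_add_of_le (not_lt.mp htm)
    rw [hfg, show m + s + 1 = m + (s + 1) by omega, hfg]
    exact hg s (by omega)

lemma pebblingLE_of_reach {V : Type} [Fintype V] {child : V → V → Prop} {p : ℝ}
    {P : FConfig V → Prop} {M : FConfig V} (hp : 0 ≤ p) (hM : P M)
    (hup : Reach child p 0 M) (hdown : Reach child p M 0) :
    PebblingLE (FMove child) (fun _ => True) (fun C n => ∃ t ≤ n, P (C t)) p := by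
  obtain ⟨n, f, m, hmn, hf0, hfm, hfn, hf⟩ := hup.exists_seq_through hdown
  have hvalid : ∀ t ≤ n, (f t).Valid ∧ (f t).weight ≤ p := by
    rintro (_ | t) ht
    · simpa [hf0, weight_zero] using And.intro valid_zero hp
    · exact (hf t (by omega)).2
  exact ⟨n, f, by simpa using hf0, by simpa using hfn, fun t ht => (hvalid t ht).1,
    fun _ _ => trivial, fun t ht => (hf t ht).1, ⟨m, hmn, hfm ▸ hM⟩,
    fun t ht => (hvalid t ht).2⟩

section

variable {V : Type} [Fintype V] [DecidableEq V] {child : V → V → Prop}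

/-- A pebbling strategy for `v` with budget `p`, usable whenever the surrounding configuration
vanishes on `S`: it sets `v` to a black value `b` (dropping its white pebble), leaving behind the
residue `J`, a configuration on `S` of weight at most `q`, and it can later remove `J` again. -/
structure Strategy (child : V → V → Prop) (v : V) (S : Set V) (p q : ℝ) (J : FConfig V) :
    Prop where
  valid : J.Valid
  zeroOn_compl : J.ZeroOn Sᶜ
  weight_le : J.weight ≤ q
  pebble : ∀ O : FConfig V, O.Valid → O.ZeroOn S → ∀ b, O.b v ≤ b → b ≤ 1 →
    Reach child (O.weight + p) O (O.update v b 0 + J)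
  cleanup : ∀ O : FConfig V, O.Valid → O.ZeroOn S → Reach child (O.weight + p) (O + J) O

namespace Strategy

variable {v : V} {S : Set V} {p q : ℝ} {J O : FConfig V}

lemma of_leaf (hleaf : ∀ c, ¬ child c v) (hp : 1 ≤ p) (hq : 0 ≤ q) :
    Strategy child v S p q 0 where
  valid := valid_zero
  zeroOn_compl _ _ := by simp
  weight_le := by rwa [weight_zero]
  pebble O hO _ b hb hb1 := by
    have hmove : FMove child (O + 0) (O.update v b 0) :=
      fmove_fire (fun c hc => absurd hc (hleaf c)) (fun _ _ => by simp) (by simp) (by simp)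
        (hleaf v) hb
    rw [add_zero] at hmove ⊢
    refine Reach.of_fmove hmove (hO.update v ((hO v).1.trans hb) le_rfl (by linarith)) ?_
    linarith [weight_update_le hO v b 0]
  cleanup O _ _ := by
    rw [add_zero]
    exact Reach.refl O

lemma reach_unpebble (hJ : Strategy child v S p q J) (hvS : v ∉ S) (hqp : q ≤ p)
    (hO : O.Valid) (hOS : O.ZeroOn (insert v S)) {x : ℝ} (hx0 : 0 ≤ x) (hx1 : x ≤ 1) :
    Reach child (O.weight + x + p) (O + indicator {v} 1 0 + J) (O + indicator {v} x 0) := by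
  have hOv := hOS v (Set.mem_insert v S)
  have hO'S : (O + indicator {v} x 0).ZeroOn S :=
    (hOS.mono (Set.subset_insert v S)).add
      (zeroOn_indicator (fun u hu huv => hvS (by simp_all)) x 0)
  have hO' : (O + indicator {v} x 0).Valid :=
    hO.add_indicator (hOS.mono (by simp)) hx0 le_rfl (by linarith)
  have hlower : O + indicator {v} 1 0 + J + indicator {v} (x - 1) 0
      = O + indicator {v} x 0 + J := by
    rw [add_right_comm, add_assoc O, indicator_add_indicator]
    norm_num
  have hmove := fmove_add_black (child := child) (C := O + indicator {v} 1 0 + J) v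
    (show x - 1 ≤ 0 by linarith)
  rw [hlower] at hmove
  have hweight : (O + indicator {v} x 0).weight = O.weight + x := by
    simp [weight_add, weight_indicator]
  refine (Reach.of_fmove hmove (hO'.add hJ.valid hO'S hJ.zeroOn_compl) ?_).trans ?_
  · rw [weight_add, hweight]
    linarith [hJ.weight_le]
  · exact (hJ.cleanup _ hO' hO'S).mono (by rw [hweight])

lemma reach_add_black (hJ : Strategy child v S p q J) (hvS : v ∉ S) (hqp : q ≤ p)
    (hO : O.Valid) (hOS : O.ZeroOn (insert v S)) {x : ℝ} (hx0 : 0 ≤ x) (hx1 : x ≤ 1) :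
    Reach child (O.weight + x + p) O (O + indicator {v} x 0) := by
  have hpebble := hJ.pebble O hO (hOS.mono (Set.subset_insert v S)) 1
    (by rw [(hOS v (Set.mem_insert v S)).1]; norm_num) le_rfl
  rw [update_eq_add_indicator (hOS v (Set.mem_insert v S))] at hpebble
  exact (hpebble.mono (by linarith)).trans (hJ.reach_unpebble hvS hqp hO hOS hx0 hx1)

lemma reach_remove_white (hJ : Strategy child v S p q J) (hvS : v ∉ S)
    (hO : O.Valid) (hOS : O.ZeroOn (insert v S)) {y : ℝ} (hy0 : 0 ≤ y) (hy1 : y ≤ 1) :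
    Reach child (O.weight + y + p) (O + indicator {v} 0 y) O := by
  have hOv := hOS v (Set.mem_insert v S)
  have hO'S : (O + indicator {v} 0 y).ZeroOn S :=
    (hOS.mono (Set.subset_insert v S)).add
      (zeroOn_indicator (fun u hu huv => hvS (by simp_all)) 0 y)
  have hO' : (O + indicator {v} 0 y).Valid :=
    hO.add_indicator (hOS.mono (by simp)) le_rfl hy0 (by linarith)
  have hweight : (O + indicator {v} 0 y).weight = O.weight + y := by
    simp [weight_add, weight_indicator]
  have hpebble := hJ.pebble _ hO' hO'S 0 (by simp [hOv.1]) zero_le_one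
  have hreset : (O + indicator {v} 0 y).update v 0 0 = O := by
    ext u <;> by_cases hu : u = v <;> simp [hu, hOv]
  rw [hreset, hweight] at hpebble
  exact hpebble.trans ((hJ.cleanup O hO (hOS.mono (Set.subset_insert v S))).mono (by linarith))

end Strategy

end

section

variable {V : Type} [DecidableEq V] {lev : V → ℕ} {O : FConfig V}

lemma valid_and_zeroOn_add_indicator {n : ℕ} {s : Finset V} (hs : ∀ c ∈ s, lev c = n)
    (hO : O.Valid) (hOz : O.ZeroOn {u | n ≤ lev u}) {a : V} (ha : lev a = n) (has : a ∉ s)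
    {x y : ℝ} (hx : 0 ≤ x) (hy : 0 ≤ y) (hxy : x + y ≤ 1) :
    (O + indicator s x y).Valid ∧
      (O + indicator s x y).ZeroOn (insert a {u | lev a < lev u}) := by
  refine ⟨hO.add_indicator (hOz.mono fun u hu => (hs u hu).ge) hx hy hxy, ?_⟩
  refine (hOz.mono ?_).add (zeroOn_indicator ?_ x y)
  · rintro u (rfl | hu)
    · exact ha.ge
    · exact (ha ▸ hu : n < lev u).le
  · rintro u (rfl | hu) hus
    · exact has hus
    · have := hs u hus
      have : n < lev u := ha ▸ hu
      omega

variable [Fintype V] {child : V → V → Prop} {p q : ℝ}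

lemma reach_add_whites {C : FConfig V} {s : Finset V} {y : ℝ} (hy : 0 ≤ y)
    (h : ∀ t ⊆ s, (C + indicator t 0 y).Valid ∧ (C + indicator t 0 y).weight ≤ p) :
    Reach child p C (C + indicator s 0 y) := by
  have := ReflTransGen.finset_induction (r := fun C C' => FMove child C C' ∧ C'.Valid ∧
    C'.weight ≤ p) (fun t => C + indicator t 0 y) s fun a t ha ht hat => by
      have hmove := fmove_add_white (child := child) (C := C + indicator t 0 y) a hy
      rw [add_assoc, ← indicator_insert hat] at hmove
      exact Reach.of_fmove hmove (h _ (insert_subset ha ht)).1 (h _ (insert_subset ha ht)).2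
  simpa [Reach, indicator_empty] using this

lemma reach_add_half_blacks {n : ℕ} {s : Finset V} (hs : ∀ c ∈ s, lev c = n)
    (hstrat : ∀ c ∈ s, ∃ J, Strategy child c {u | lev c < lev u} p q J) (hqp : q ≤ p)
    (hO : O.Valid) (hOz : O.ZeroOn {u | n ≤ lev u}) :
    Reach child (O.weight + s.card / 2 + p) O (O + indicator s (1 / 2) 0) := by
  have := ReflTransGen.finset_induction (r := fun C C' => FMove child C C' ∧ C'.Valid ∧
    C'.weight ≤ O.weight + s.card / 2 + p) (fun t => O + indicator t (1 / 2) 0) s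
    fun a t ha ht hat => by
      obtain ⟨J, hJ⟩ := hstrat a ha
      obtain ⟨hOt, hOtz⟩ := valid_and_zeroOn_add_indicator (fun c hc => hs c (ht hc)) hO hOz
        (hs a ha) hat (x := 1 / 2) (y := 0) (by norm_num) le_rfl (by norm_num)
      have hreach := hJ.reach_add_black (fun h => lt_irrefl (lev a) h) hqp hOt hOtz
        (x := 1 / 2) (by norm_num) (by norm_num)
      rw [add_assoc O, ← indicator_insert hat] at hreach
      refine hreach.mono ?_
      have hcard : (t.card : ℝ) + 1 ≤ s.card := by
        exact_mod_cast card_insert_of_notMem hat ▸ card_le_card (insert_subset ha ht)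
      rw [weight_add, weight_indicator]
      linarith
  simpa [Reach, indicator_empty] using this

lemma reach_remove_half_whites {n : ℕ} {s : Finset V} (hs : ∀ c ∈ s, lev c = n)
    (hstrat : ∀ c ∈ s, ∃ J, Strategy child c {u | lev c < lev u} p q J)
    (hO : O.Valid) (hOz : O.ZeroOn {u | n ≤ lev u}) :
    Reach child (O.weight + s.card / 2 + p) (O + indicator s 0 (1 / 2)) O := by
  have := ReflTransGen.finset_induction (r := Function.swap fun C C' => FMove child C C' ∧
    C'.Valid ∧ C'.weight ≤ O.weight + s.card / 2 + p) (fun t => O + indicator t 0 (1 / 2)) s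
    fun a t ha ht hat => by
      obtain ⟨J, hJ⟩ := hstrat a ha
      obtain ⟨hOt, hOtz⟩ := valid_and_zeroOn_add_indicator (fun c hc => hs c (ht hc)) hO hOz
        (hs a ha) hat (x := 0) (y := 1 / 2) le_rfl (by norm_num) (by norm_num)
      have hreach := hJ.reach_remove_white (fun h => lt_irrefl (lev a) h) hOt hOtz
        (y := 1 / 2) (by norm_num) (by norm_num)
      rw [add_assoc O, ← indicator_insert hat] at hreach
      refine reflTransGen_swap.mpr (hreach.mono ?_)
      have hcard : (t.card : ℝ) + 1 ≤ s.card := by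
        exact_mod_cast card_insert_of_notMem hat ▸ card_le_card (insert_subset ha ht)
      rw [weight_add, weight_indicator]
      linarith
  simpa [Reach, indicator_empty] using reflTransGen_swap.mp this

end

section Step

variable {V : Type} [DecidableEq V] {child : V → V → Prop} {lev : V → ℕ} {v c₀ : V}
  {K : Finset V} {J₀ O : FConfig V}

lemma fmove_fire_children (hK : ∀ c, child c v ↔ c ∈ K)
    (hlev : ∀ c ∈ K, lev c = lev v + 1) (hc₀ : c₀ ∈ K)
    (hJ₀ : J₀.ZeroOn {u | lev c₀ < lev u}ᶜ) (hOz : O.ZeroOn {u | lev v < lev u}) {b : ℝ}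
    (hb : O.b v ≤ b) :
    FMove child (O + indicator (K.erase c₀) (1 / 2) (1 / 2) + indicator {c₀} 1 0 + J₀)
      (O.update v b 0 + (indicator (K.erase c₀) 0 (1 / 2) + J₀)) := by
  set s := K.erase c₀
  have hlev₀ := hlev c₀ hc₀
  have hvs : v ∉ s := fun h => by have := hlev v (mem_of_mem_erase h); omega
  have hJv := hJ₀ v (show ¬ lev c₀ < lev v by omega)
  have hWv : (indicator s 0 (1 / 2) + J₀).b v = 0 ∧ (indicator s 0 (1 / 2) + J₀).w v = 0 := by
    simp [hvs, hJv]
  rw [show O + indicator s (1 / 2) (1 / 2) + indicator {c₀} 1 0 + J₀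
      = (O + (indicator s 0 (1 / 2) + J₀)) + (indicator s (1 / 2) 0 + indicator {c₀} 1 0) by
    rw [indicator_eq_add_indicator s (1 / 2) (1 / 2)]
    abel, ← add_update hWv]
  refine fmove_fire (fun c hc => ?_) ?_ (fun u => ?_) (fun u => by simp)
    (fun h => by have := hlev v ((hK v).mp h); omega) (by rw [add_b, hWv.1, add_zero]; exact hb)
  · have hcK := (hK c).mp hc
    have hlc := hlev c hcK
    have hOc := hOz c (show lev v < lev c by omega)
    have hJc := hJ₀ c (show ¬ lev c₀ < lev c by omega)
    by_cases hcc : c = c₀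
    · subst hcc
      simp [s, hOc, hJc]
    · simp [s, hOc, hJc, hcc, hcK]
      norm_num
  · refine ZeroOn.add (zeroOn_indicator (fun u (hu : ¬ child u v) hus => hu ?_) _ _)
      (zeroOn_indicator (fun u (hu : ¬ child u v) hus => hu ?_) _ _)
    · exact (hK u).mpr (mem_of_mem_erase hus)
    · rw [mem_singleton.mp hus]
      exact (hK c₀).mpr hc₀
  · simp only [add_b, indicator_b]
    split_ifs <;> norm_num

lemma valid_add_children_config (hlev : ∀ c ∈ K, lev c = lev v + 1) (hc₀ : c₀ ∈ K)
    {t : Finset V} (ht : t ⊆ K.erase c₀) (hJ₀ : J₀.Valid)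
    (hJ₀z : J₀.ZeroOn {u | lev c₀ < lev u}ᶜ) (hO : O.Valid)
    (hOz : O.ZeroOn {u | lev v < lev u}) :
    (O + (indicator (K.erase c₀) (1 / 2) 0 + indicator {c₀} 1 0 + indicator t 0 (1 / 2)
      + J₀)).Valid := by
  set s := K.erase c₀
  have hlev₀ := hlev c₀ hc₀
  have hs : ∀ c ∈ s, lev c = lev v + 1 := fun c hc => hlev c (mem_of_mem_erase hc)
  have hX : (indicator s (1 / 2) 0 + indicator {c₀} 1 0 + indicator t 0 (1 / 2)).Valid := by
    intro u
    have hts : u ∈ t → u ∈ s := fun h => ht h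
    have hsc : u ∈ s → u ≠ c₀ := fun h he => notMem_erase c₀ K (he ▸ h : c₀ ∈ s)
    simp only [add_b, add_w, indicator_b, indicator_w, mem_singleton]
    split_ifs <;> simp_all <;> norm_num
  have hXz : (indicator s (1 / 2) 0 + indicator {c₀} 1 0 + indicator t 0 (1 / 2)).ZeroOn
      {u | lev u ≠ lev v + 1} :=
    ((zeroOn_indicator_of_level hs _ _).add
      (zeroOn_indicator_of_level (by simpa using hlev₀) _ _)).add
      (zeroOn_indicator_of_level (fun c hc => hs c (ht hc)) _ _)
  refine hO.add (hX.add hJ₀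
    (hXz.mono fun u (hu : lev c₀ < lev u) => (by omega : lev u ≠ lev v + 1)) hJ₀z) hOz
    ((hXz.mono fun u (hu : ¬ lev v < lev u) => (by omega : lev u ≠ lev v + 1)).add
      (hJ₀z.mono (Set.compl_subset_compl.mpr
        fun u (hu : lev c₀ < lev u) => (by omega : lev v < lev u))))

variable [Fintype V] {p q : ℝ}

lemma reach_children_full (hlev : ∀ c ∈ K, lev c = lev v + 1) (hc₀ : c₀ ∈ K)
    (hstrat : ∀ c ∈ K, ∃ J, Strategy child c {u | lev c < lev u} p q J)
    (hJ₀ : Strategy child c₀ {u | lev c₀ < lev u} p q J₀)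
    (hpq : q + 1 + ((K.card : ℝ) - 1) / 2 ≤ p)
    (hO : O.Valid) (hOz : O.ZeroOn {u | lev v < lev u}) :
    Reach child (O.weight + (p + ((K.card : ℝ) - 1) / 2)) O
      (O + indicator (K.erase c₀) (1 / 2) (1 / 2) + indicator {c₀} 1 0 + J₀) := by
  set s := K.erase c₀
  have hs : ∀ c ∈ s, lev c = lev v + 1 := fun c hc => hlev c (mem_of_mem_erase hc)
  have hscard : (s.card : ℝ) = K.card - 1 := cast_card_erase_of_mem hc₀
  have hc₀s : c₀ ∉ s := notMem_erase c₀ K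
  have hlev₀ := hlev c₀ hc₀
  have hfill := reach_add_half_blacks hs (fun c hc => hstrat c (mem_of_mem_erase hc))
    (by linarith) hO hOz
  obtain ⟨hO₁, hO₁z⟩ := valid_and_zeroOn_add_indicator hs hO hOz hlev₀ hc₀s
    (x := 1 / 2) (y := 0) (by norm_num) le_rfl (by norm_num)
  have hc₀zero := hO₁z c₀ (Set.mem_insert _ _)
  have hlast := hJ₀.pebble _ hO₁ (hO₁z.mono (Set.subset_insert _ _)) 1
    (by rw [hc₀zero.1]; norm_num) le_rfl
  rw [update_eq_add_indicator hc₀zero, weight_add, weight_indicator, hscard] at hlast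
  have hwhites : Reach child (O.weight + (p + ((K.card : ℝ) - 1) / 2))
      (O + indicator s (1 / 2) 0 + indicator {c₀} 1 0 + J₀)
      (O + indicator s (1 / 2) 0 + indicator {c₀} 1 0 + J₀ + indicator s 0 (1 / 2)) := by
    refine reach_add_whites (by norm_num) fun t ht => ?_
    rw [show O + indicator s (1 / 2) 0 + indicator {c₀} 1 0 + J₀ + indicator t 0 (1 / 2)
      = O + (indicator s (1 / 2) 0 + indicator {c₀} 1 0 + indicator t 0 (1 / 2) + J₀) by abel]
    refine ⟨valid_add_children_config hlev hc₀ ht hJ₀.valid hJ₀.zeroOn_compl hO hOz, ?_⟩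
    have htcard : (t.card : ℝ) ≤ s.card := by exact_mod_cast card_le_card ht
    simp only [weight_add, weight_indicator, card_singleton, Nat.cast_one]
    linarith [hJ₀.weight_le]
  have hfull : O + indicator s (1 / 2) 0 + indicator {c₀} 1 0 + J₀ + indicator s 0 (1 / 2)
      = O + indicator s (1 / 2) (1 / 2) + indicator {c₀} 1 0 + J₀ := by
    rw [indicator_eq_add_indicator s (1 / 2) (1 / 2)]
    abel
  rw [hfull] at hwhites
  exact ((hfill.mono (by rw [hscard]; linarith)).trans (hlast.mono (by linarith))).trans hwhites

theorem Strategy.of_children (hK : ∀ c, child c v ↔ c ∈ K)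
    (hlev : ∀ c ∈ K, lev c = lev v + 1) (hc₀ : c₀ ∈ K)
    (hstrat : ∀ c ∈ K, ∃ J, Strategy child c {u | lev c < lev u} p q J)
    (hpq : q + 1 + ((K.card : ℝ) - 1) / 2 ≤ p) :
    ∃ J, Strategy child v {u | lev v < lev u} (p + ((K.card : ℝ) - 1) / 2)
      (q + ((K.card : ℝ) - 1) / 2) J := by
  set s := K.erase c₀
  have hs : ∀ c ∈ s, lev c = lev v + 1 := fun c hc => hlev c (mem_of_mem_erase hc)
  have hscard : (s.card : ℝ) = K.card - 1 := cast_card_erase_of_mem hc₀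
  obtain ⟨J₀, hJ₀⟩ := hstrat c₀ hc₀
  have hlev₀ := hlev c₀ hc₀
  have hWvalid : (indicator s 0 (1 / 2) + J₀).Valid :=
    (valid_indicator s le_rfl (by norm_num) (by norm_num)).add hJ₀.valid
      ((zeroOn_indicator_of_level hs _ _).mono
        fun u (hu : lev c₀ < lev u) => (by omega : lev u ≠ lev v + 1))
      hJ₀.zeroOn_compl
  have hWzero : (indicator s 0 (1 / 2) + J₀).ZeroOn {u | lev v < lev u}ᶜ :=
    ((zeroOn_indicator_of_level hs _ _).mono
        fun u (hu : ¬ lev v < lev u) => (by omega : lev u ≠ lev v + 1)).add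
      (hJ₀.zeroOn_compl.mono (Set.compl_subset_compl.mpr
        fun u (hu : lev c₀ < lev u) => (by omega : lev v < lev u)))
  refine ⟨indicator s 0 (1 / 2) + J₀, hWvalid, hWzero, ?_, fun O hO hOz b hb hb1 => ?_,
    fun O hO hOz => ?_⟩
  · rw [weight_add, weight_indicator, hscard]
    linarith [hJ₀.weight_le]
  · refine (reach_children_full hlev hc₀ hstrat hJ₀ hpq hO hOz).trans
      (Reach.of_fmove (fmove_fire_children hK hlev hc₀ hJ₀.zeroOn_compl hOz hb)
        ((hO.update v ((hO v).1.trans hb) le_rfl (by linarith)).add hWvalid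
          (hOz.update (lt_irrefl (lev v)) b 0) hWzero) ?_)
    rw [weight_add, weight_add, weight_indicator, hscard]
    linarith [weight_update_le hO v b 0, hJ₀.weight_le]
  · obtain ⟨hO₂, hO₂z⟩ := valid_and_zeroOn_add_indicator hs hO hOz hlev₀
      (notMem_erase c₀ K) (x := 0) (y := 1 / 2) le_rfl (by norm_num) (by norm_num)
    have hclean := hJ₀.cleanup _ hO₂ (hO₂z.mono (Set.subset_insert _ _))
    rw [weight_add, weight_indicator, hscard] at hclean
    rw [← add_assoc O]
    refine (hclean.mono ?_).trans
      (reach_remove_half_whites hs (fun c hc => hstrat c (mem_of_mem_erase hc)) hO hOz |>.mono ?_)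
    · linarith
    · rw [hscard]
      linarith

end Step

section CompleteTree

variable {d h : ℕ}

def childNode (v : TNode d h) (hv : (v.1 : ℕ) + 1 < h) (j : Fin d) : TNode d h :=
  ⟨⟨v.1 + 1, hv⟩, ⟨d * v.2 + j, by
    have hvd : (v.2 : ℕ) + 1 ≤ d ^ (v.1 : ℕ) := v.2.isLt
    calc d * v.2 + j < d * (v.2 + 1) := by rw [mul_add, mul_one]; exact Nat.add_lt_add_left j.isLt _
      _ ≤ d * d ^ (v.1 : ℕ) := Nat.mul_le_mul_left d hvd
      _ = d ^ ((v.1 : ℕ) + 1) := (pow_succ' d _).symm⟩⟩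

lemma childNode_injective (v : TNode d h) (hv : (v.1 : ℕ) + 1 < h) :
    Function.Injective (childNode v hv) := by
  intro i j hij
  have := congrArg (fun u : TNode d h => (u.2 : ℕ)) hij
  simp only [childNode] at this
  exact Fin.ext (by omega)

lemma isChild_iff_exists_childNode {v : TNode d h} (hv : (v.1 : ℕ) + 1 < h) {c : TNode d h} :
    IsChild d h c v ↔ ∃ j, childNode v hv j = c := by
  constructor
  · rintro ⟨hlev, j, hj⟩
    refine ⟨j, ?_⟩
    obtain ⟨⟨l, hl⟩, ⟨i, hi⟩⟩ := c
    simp only at hlev hj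
    subst hlev hj
    rfl
  · rintro ⟨j, rfl⟩
    exact ⟨rfl, j, rfl⟩

lemma not_isChild_of_bottom {v : TNode d h} (hv : ¬ (v.1 : ℕ) + 1 < h) (c : TNode d h) :
    ¬ IsChild d h c v := fun hc => hv (hc.1 ▸ c.1.isLt)

theorem exists_strategy (hd : 1 ≤ d) (k : ℕ) (v : TNode d h) (hk : (v.1 : ℕ) + k = h) :
    ∃ J, Strategy (IsChild d h) v {u | (v.1 : ℕ) < u.1}
      (((d : ℝ) - 1) * k / 2 + 1) (((d : ℝ) - 1) * (k - 1) / 2) J := by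
  have hd' : (1 : ℝ) ≤ d := by exact_mod_cast hd
  induction k generalizing v with
  | zero => exact absurd v.1.isLt (by omega)
  | succ k ih =>
    by_cases hv : (v.1 : ℕ) + 1 < h
    · have hcard : (univ.image (childNode v hv)).card = d := by
        rw [card_image_of_injective _ (childNode_injective v hv), card_univ, Fintype.card_fin]
      obtain ⟨J, hJ⟩ := Strategy.of_children (lev := fun u : TNode d h => (u.1 : ℕ)) (v := v)
        (K := univ.image (childNode v hv)) (c₀ := childNode v hv ⟨0, hd⟩)
        (fun c => by simp [isChild_iff_exists_childNode hv])
        (fun c hc => by obtain ⟨j, -, rfl⟩ := mem_image.mp hc; rfl)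
        (mem_image_of_mem _ (mem_univ _))
        (fun c hc => ih c (by obtain ⟨j, -, rfl⟩ := mem_image.mp hc; simp [childNode]; omega))
        (by rw [hcard]; linarith)
      rw [hcard] at hJ
      exact ⟨J, by convert hJ using 1 <;> (push_cast; ring)⟩
    · obtain rfl : k = 0 := by omega
      exact ⟨0, Strategy.of_leaf (not_isChild_of_bottom hv) (by norm_num; linarith) (by simp)⟩

end CompleteTree

/-- For all `d, h ≥ 2`, the tree `T_d^h` can be fractionally pebbled with at most
`(d-1)h/2 + 1` pebbles. -/
theorem frPebbles_upper (d h : ℕ) (hd : 2 ≤ d) (hh : 2 ≤ h) :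
    FRPebbles d h (by omega) (((d : ℝ) - 1) * h / 2 + 1) := by
  set root := troot d h (by omega)
  obtain ⟨J, hJ⟩ := exists_strategy (by omega) h root (by simp [root, troot])
  have hrootS : root ∉ {u : TNode d h | (root.1 : ℕ) < u.1} := lt_irrefl (root.1 : ℕ)
  have hd' : (2 : ℝ) ≤ d := by exact_mod_cast hd
  have hh' : (0 : ℝ) ≤ h := h.cast_nonneg
  have hpebble := hJ.pebble 0 valid_zero (fun _ _ => by simp) 1 (by simp) le_rfl
  rw [update_eq_add_indicator (by simp)] at hpebble
  have hunpebble := hJ.reach_unpebble hrootS (by nlinarith) valid_zero (fun _ _ => by simp)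
    le_rfl zero_le_one
  simp only [weight_zero, indicator_zero, zero_add, add_zero] at hpebble hunpebble
  exact pebblingLE_of_reach (P := fun C => C.b root = 1) (by nlinarith)
    (by simp [(hJ.zeroOn_compl root hrootS).1]) hpebble hunpebble
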